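/- arXiv:2407.21603 — 3 statements merged into one kernel-verified Lean document; each statement's English description precedes it below -/
import Mathlib

section
/- Let β ∈ (1,2) and let w_k^{(β)} be the Grünwald weights. Then k^{β+1} · w_k^{(β)} converges to 1/Γ(−β) as k → ∞; that is, w_k^{(β)} = (1/(Γ(−β) k^{β+1}))·(1 + O(1/k)). -/
/-!
The recursion gives `w_k = (0 - β)(1 - β)⋯(k - 1 - β) / k!`, which is, up to the factor
`(1 - β / k)`, the reciprocal of the `k`-th term of Euler's limit formula
`Γ(s) = lim k ^ s k! / (s (s + 1) ⋯ (s + k))` at `s = -β`. Since `-β` is not a pole of `Γ`,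
`k ^ (β + 1) w_k` tends to `1 / Γ(-β)`.
-/

open Filter

/-- The Grünwald weights: `w β 0 = 1`, `w β k = (1 - (1+β)/k) * w β (k-1)` for `k ≥ 1`. -/
noncomputable def grunwaldW (β : ℝ) : ℕ → ℝ
  | 0 => 1
  | k + 1 => (1 - (1 + β) / ((k : ℝ) + 1)) * grunwaldW β k

open Finset

theorem grunwaldW_eq_prod_div_factorial (β : ℝ) (k : ℕ) :
    grunwaldW β k = (∏ j ∈ range k, ((j : ℝ) - β)) / k.factorial := by
  induction k with
  | zero => simp [grunwaldW]
  | succ k ih =>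
    rw [grunwaldW, ih, prod_range_succ, Nat.factorial_succ]
    push_cast
    field_simp
    ring

theorem inv_GammaSeq_neg_eq (β : ℝ) {k : ℕ} (hk : k ≠ 0) :
    (Real.GammaSeq (-β) k)⁻¹ = (1 - β / k) * ((k : ℝ) ^ (β + 1) * grunwaldW β k) := by
  have hk0 : (0 : ℝ) < k := by positivity
  have hprod : ∏ j ∈ range (k + 1), (-β + j) = (∏ j ∈ range k, ((j : ℝ) - β)) * (k - β) := by
    simp only [prod_range_succ, neg_add_eq_sub]
  rw [Real.GammaSeq, inv_div, hprod, grunwaldW_eq_prod_div_factorial, Real.rpow_neg hk0.le,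
    Real.rpow_add hk0, Real.rpow_one]
  have : (k : ℝ) ^ β ≠ 0 := (Real.rpow_pos_of_pos hk0 β).ne'
  field_simp

theorem tendsto_rpow_mul_grunwaldW {β : ℝ} (hβ : ∀ m : ℕ, β ≠ m) :
    Tendsto (fun k : ℕ => (k : ℝ) ^ (β + 1) * grunwaldW β k) atTop
      (nhds (1 / Real.Gamma (-β))) := by
  have hΓ : Real.Gamma (-β) ≠ 0 :=
    Real.Gamma_ne_zero fun m h => hβ m (neg_inj.mp h)
  have hfactor : Tendsto (fun k : ℕ => (1 - β / k)⁻¹) atTop (nhds 1) := by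
    simpa using ((tendsto_const_div_atTop_nhds_zero_nat β).const_sub 1).inv₀ (by norm_num)
  have hlim := hfactor.mul ((Real.GammaSeq_tendsto_Gamma (-β)).inv₀ hΓ)
  rw [one_mul, ← one_div] at hlim
  refine hlim.congr' ?_
  filter_upwards [eventually_ne_atTop 0] with k hk
  have hkβ : 1 - β / k ≠ 0 := sub_ne_zero.mpr (div_ne_one_of_ne (hβ k)).symm
  rw [inv_GammaSeq_neg_eq β hk, inv_mul_cancel_left₀ hkβ]

theorem grunwald_weights_asymptotics (β : ℝ) (hβ1 : 1 < β) (hβ2 : β < 2) :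
    Tendsto (fun k : ℕ => (k : ℝ) ^ (β + 1) * grunwaldW β k) atTop
      (nhds (1 / Real.Gamma (-β))) := by
  refine tendsto_rpow_mul_grunwaldW fun m hm => ?_
  have h1 : 1 < m := by exact_mod_cast hm ▸ hβ1
  have h2 : m < 2 := by exact_mod_cast hm ▸ hβ2
  omega
end

section
/- Let Δt > 0, h > 0, β ∈ (1,2), let (g_k)_{k≥0} be a sequence of real numbers and ρ a real number such that g_1 < 0, g_0 + g_2 > 0, g_k > 0 for all k ≥ 3, and ∑_{k=0}^∞ g_k converges to ρ. For N ≥ 2, define the symmetric Toeplitz matrix G ∈ ℝ^{N×N} by G_{ij} = (Δt/(2h^β)) · a_{|i−j|}, where a_0 = 2(ρ − g_1), a_1 = −(g_0 + g_2), and a_m = −g_{m+1} for 2 ≤ m ≤ N−1. Then G has positive diagonal entries, is strictly diagonally dominant by rows, and is symmetric positive definite. -/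
/-!
`G` is a positive multiple of the symmetric Toeplitz matrix with diagonal `2(ρ - g₁)` and
off-diagonal entries `-w_{|i-j|}`, where `w₁ = g₀ + g₂` and `w_m = g_{m+1}` for `m ≥ 2` are
positive. Since `∑_{m ≥ 1} w_m = ρ - g₁`, each side of the diagonal in a row contributes a
partial sum of this positive series, which is strictly less than `ρ - g₁`. So `G` is strictly
diagonally dominant with positive diagonal, and by Gershgorin's theorem its (real) eigenvalues
are positive.
-/

/-- The symmetric Toeplitz discretization matrix `G` with entries
`G i j = (Δt/(2 h^β)) a_{|i-j|}`, where `a 0 = 2(ρ - g 1)`, `a 1 = -(g 0 + g 2)`,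
and `a m = -g (m+1)` for `m ≥ 2`. -/
noncomputable def toeplitzG (Δt hstep β : ℝ) (g : ℕ → ℝ) (ρ : ℝ) (N : ℕ) :
    Matrix (Fin N) (Fin N) ℝ :=
  Matrix.of fun i j =>
    Δt / (2 * hstep ^ β) *
      (if ((i : ℤ) - (j : ℤ)).natAbs = 0 then 2 * (ρ - g 1)
       else if ((i : ℤ) - (j : ℤ)).natAbs = 1 then -(g 0 + g 2)
       else -g (((i : ℤ) - (j : ℤ)).natAbs + 1))

open Finset

theorem sum_range_lt_of_hasSum {α : Type*} [AddCommMonoid α] [PartialOrder α]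
    [IsOrderedCancelAddMonoid α] [TopologicalSpace α] [OrderClosedTopology α] {f : ℕ → α} {s : α}
    (hf : ∀ m, 0 < f m) (h : HasSum f s) (n : ℕ) : ∑ m ∈ range n, f m < s :=
  calc ∑ m ∈ range n, f m < ∑ m ∈ range (n + 1), f m := by
        rw [sum_range_succ]; exact lt_add_of_pos_right _ (hf n)
    _ ≤ s := sum_le_hasSum _ (fun m _ => (hf m).le) h

theorem Fin.natAbs_sub_ne_zero {N : ℕ} {i j : Fin N} (h : i ≠ j) :
    ((i : ℤ) - (j : ℤ)).natAbs ≠ 0 := by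
  have := Fin.val_ne_of_ne h
  omega

theorem Fin.sum_univ_erase_natAbs_sub {M : Type*} [AddCommMonoid M] [IsLeftCancelAdd M]
    (f : ℕ → M) {N : ℕ} (i : Fin N) :
    ∑ j ∈ univ.erase i, f ((i : ℤ) - (j : ℤ)).natAbs =
      ∑ m ∈ range i, f (m + 1) + ∑ m ∈ range (N - 1 - i), f (m + 1) := by
  have hsplit := add_sum_erase univ (fun j : Fin N => f ((i : ℤ) - (j : ℤ)).natAbs) (mem_univ i)
  rw [Fin.sum_univ_eq_sum_range (fun j => f (((i : ℕ) : ℤ) - (j : ℤ)).natAbs)] at hsplit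
  obtain ⟨k, hk⟩ : ∃ k, N = i + 1 + k := ⟨N - 1 - i, by omega⟩
  rw [congrArg range hk, sum_range_add, sum_range_succ] at hsplit
  have hleft : ∑ j ∈ range i, f (((i : ℕ) : ℤ) - (j : ℤ)).natAbs = ∑ m ∈ range i, f (m + 1) := by
    rw [← sum_range_reflect (fun m => f (m + 1))]
    exact sum_congr rfl fun j hj => congrArg f (by rw [mem_range] at hj; omega)
  have hright : ∀ x : ℕ, f (((i : ℕ) : ℤ) - ((i + 1 + x : ℕ) : ℤ)).natAbs = f (x + 1) :=
    fun x => congrArg f (by omega)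
  simp only [hleft, hright, sub_self, Int.natAbs_zero] at hsplit
  rw [show N - 1 - i = k by omega]
  exact add_left_cancel (hsplit.trans (by abel))

theorem Fin.sum_univ_erase_natAbs_sub_lt {α : Type*} [AddCommMonoid α] [PartialOrder α]
    [IsOrderedCancelAddMonoid α] [TopologicalSpace α] [OrderClosedTopology α] {f : ℕ → α} {s : α}
    (hf : ∀ m, 0 < f (m + 1)) (h : HasSum (fun m => f (m + 1)) s) {N : ℕ} (i : Fin N) :
    ∑ j ∈ univ.erase i, f ((i : ℤ) - (j : ℤ)).natAbs < s + s := by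
  rw [Fin.sum_univ_erase_natAbs_sub]
  exact add_lt_add (sum_range_lt_of_hasSum hf h _) (sum_range_lt_of_hasSum hf h _)

open scoped ComplexOrder in
theorem Matrix.IsHermitian.posDef_of_sum_erase_norm_lt {𝕜 n : Type*} [RCLike 𝕜] [Fintype n]
    [DecidableEq n] {A : Matrix n n 𝕜} (hA : A.IsHermitian)
    (hdom : ∀ i, ∑ j ∈ univ.erase i, ‖A i j‖ < RCLike.re (A i i)) : A.PosDef := by
  refine hA.posDef_iff_eigenvalues_pos.mpr fun i => ?_
  have hμ : Module.End.HasEigenvalue A.toLin' (hA.eigenvalues i : 𝕜) :=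
    Module.End.hasEigenvalue_iff_mem_spectrum.mpr <| by
      simpa using spectrum.algebraMap_mem 𝕜 (hA.eigenvalues_mem_spectrum_real i)
  obtain ⟨k, hk⟩ := eigenvalue_mem_ball hμ
  rw [Metric.mem_closedBall, dist_comm, dist_eq_norm] at hk
  have hre : RCLike.re (A k k) - hA.eigenvalues i ≤ ‖A k k - hA.eigenvalues i‖ := by
    simpa using RCLike.re_le_norm (A k k - hA.eigenvalues i)
  linarith [hdom k]

/-- The sequence `-a` of the paper: `offDiagWeight g m = -a_m` for `m ≥ 1`. -/
def offDiagWeight (g : ℕ → ℝ) (m : ℕ) : ℝ := if m = 1 then g 0 + g 2 else g (m + 1)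

theorem offDiagWeight_succ_pos {g : ℕ → ℝ} (hg02 : 0 < g 0 + g 2) (hgk : ∀ k, 3 ≤ k → 0 < g k)
    (m : ℕ) : 0 < offDiagWeight g (m + 1) := by
  unfold offDiagWeight
  split_ifs
  · exact hg02
  · exact hgk _ (by omega)

theorem hasSum_offDiagWeight_succ {g : ℕ → ℝ} {ρ : ℝ} (hsum : HasSum g ρ) :
    HasSum (fun m => offDiagWeight g (m + 1)) (ρ - g 1) := by
  rw [← hasSum_nat_add_iff' 1]
  simpa [offDiagWeight, sum_range_succ, sub_sub, add_comm, add_left_comm, add_assoc] using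
    (hasSum_nat_add_iff' 3).mpr hsum

section toeplitzG

variable (Δt hstep β : ℝ) (g : ℕ → ℝ) (ρ : ℝ) {N : ℕ}

theorem toeplitzG_apply_self (i : Fin N) :
    toeplitzG Δt hstep β g ρ N i i = Δt / (2 * hstep ^ β) * (2 * (ρ - g 1)) := by
  simp [toeplitzG]

theorem toeplitzG_apply_of_ne {i j : Fin N} (h : i ≠ j) :
    toeplitzG Δt hstep β g ρ N i j =
      -(Δt / (2 * hstep ^ β) * offDiagWeight g ((i : ℤ) - (j : ℤ)).natAbs) := by
  simp only [toeplitzG, Matrix.of_apply, if_neg (Fin.natAbs_sub_ne_zero h), offDiagWeight]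
  split_ifs <;> ring

theorem toeplitzG_isHermitian : (toeplitzG Δt hstep β g ρ N).IsHermitian := by
  ext i j
  simp only [Matrix.conjTranspose_apply, star_trivial, toeplitzG, Matrix.of_apply]
  rw [← Int.natAbs_neg, neg_sub]

end toeplitzG

theorem discretization_matrix_spd_general (Δt hstep β : ℝ) (hΔt : 0 < Δt) (hh : 0 < hstep)
    (g : ℕ → ℝ) (ρ : ℝ)
    (hg02 : 0 < g 0 + g 2) (hgk : ∀ k : ℕ, 3 ≤ k → 0 < g k)
    (hsum : HasSum g ρ) (N : ℕ) :
    (∀ i : Fin N, 0 < toeplitzG Δt hstep β g ρ N i i) ∧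
    (∀ i : Fin N,
      ∑ j ∈ Finset.univ.erase i, |toeplitzG Δt hstep β g ρ N i j| <
        |toeplitzG Δt hstep β g ρ N i i|) ∧
    (toeplitzG Δt hstep β g ρ N).PosDef := by
  set c := Δt / (2 * hstep ^ β)
  have hc : 0 < c := by positivity
  have hw := offDiagWeight_succ_pos hg02 hgk
  have hws := hasSum_offDiagWeight_succ hsum
  have hρ : 0 < ρ - g 1 := by simpa using sum_range_lt_of_hasSum hw hws 0
  have hdiag : ∀ i : Fin N, 0 < toeplitzG Δt hstep β g ρ N i i := fun i => by
    rw [toeplitzG_apply_self]; positivity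
  have hdom : ∀ i : Fin N,
      ∑ j ∈ univ.erase i, |toeplitzG Δt hstep β g ρ N i j| < toeplitzG Δt hstep β g ρ N i i :=
    fun i => calc
      _ = c * ∑ j ∈ univ.erase i, offDiagWeight g ((i : ℤ) - (j : ℤ)).natAbs := by
        rw [mul_sum]
        refine sum_congr rfl fun j hj => ?_
        have hij := (ne_of_mem_erase hj).symm
        obtain ⟨m, hm⟩ := Nat.exists_eq_succ_of_ne_zero (Fin.natAbs_sub_ne_zero hij)
        rw [toeplitzG_apply_of_ne _ _ _ _ _ hij, abs_neg, hm, abs_of_pos (mul_pos hc (hw m))]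
      _ < c * (2 * (ρ - g 1)) := by
        rw [two_mul]; gcongr; exact Fin.sum_univ_erase_natAbs_sub_lt hw hws i
      _ = _ := (toeplitzG_apply_self ..).symm
  refine ⟨hdiag, fun i => by rw [abs_of_pos (hdiag i)]; exact hdom i, ?_⟩
  exact (toeplitzG_isHermitian ..).posDef_of_sum_erase_norm_lt fun i => by simpa using hdom i

theorem discretization_matrix_spd (Δt hstep β : ℝ) (hΔt : 0 < Δt) (hh : 0 < hstep)
    (hβ1 : 1 < β) (hβ2 : β < 2) (g : ℕ → ℝ) (ρ : ℝ)
    (hg1 : g 1 < 0) (hg02 : 0 < g 0 + g 2) (hgk : ∀ k : ℕ, 3 ≤ k → 0 < g k)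
    (hsum : HasSum g ρ) (N : ℕ) (hN : 2 ≤ N) :
    (∀ i : Fin N, 0 < toeplitzG Δt hstep β g ρ N i i) ∧
    (∀ i : Fin N,
      ∑ j ∈ Finset.univ.erase i, |toeplitzG Δt hstep β g ρ N i j| <
        |toeplitzG Δt hstep β g ρ N i i|) ∧
    (toeplitzG Δt hstep β g ρ N).PosDef :=
  discretization_matrix_spd_general Δt hstep β hΔt hh g ρ hg02 hgk hsum N
end

section
/- Let β ∈ (1,2), λ ≥ 0, h > 0, and let γ1, γ2, γ3 be arbitrary real numbers. Then the series of tempered WSGD weights converges absolutely and ∑_{k=0}^∞ g_k^{(β)} = (γ1 e^{hλ} + γ2 + γ3 e^{−hλ})·(1 − e^{−hλ})^β = ρ_β. -/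
/-- The tempered WSGD weights `g_k^{(β)}`. -/
noncomputable def temperedG (β lam h γ1 γ2 γ3 : ℝ) : ℕ → ℝ
  | 0 => γ1 * Real.exp (h * lam)
  | 1 => γ1 * grunwaldW β 1 + γ2
  | k + 2 =>
      (γ1 * grunwaldW β (k + 2) + γ2 * grunwaldW β (k + 1) + γ3 * grunwaldW β k) *
        Real.exp (-(((k : ℝ) + 1) * (h * lam)))

/-!
The weights `w_k` are the coefficients `(-1)^k (β choose k)` of the binomial series of
`(1 - z)^β`, so `∑ w_k z^k = (1 - z)^β` for `|z| < 1`. For `1 ≤ β ≤ 2` the series also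
converges at `z = 1`: `w_k ≥ 0` for `k ≥ 2`, while the partial sums
`∑_{k ≤ n} w_k^{(β)} = w_n^{(β-1)}` are `≤ 0` for `n ≥ 1`.
Abel's limit theorem then gives `∑ w_k = lim_{z → 1⁻} (1 - z)^β = 0`.
With `z = e^{-hλ}`, the tempered weights are `γ1 z⁻¹ w_k z^k + γ2 w_{k-1} z^{k-1} + γ3 z w_{k-2} z^{k-2}`,
whose sum is `(γ1 z⁻¹ + γ2 + γ3 z) (1 - z)^β`; absolute convergence is automatic for real series.
-/

open Finset Filter Topology Polynomial

theorem Ring.choose_succ_right_eq {K : Type*} [Field K] [CharZero K] (a : K) (k : ℕ) :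
    Ring.choose a (k + 1) * (k + 1) = Ring.choose a k * (a - k) := by
  rw [Ring.choose_eq_smul, Ring.choose_eq_smul, descPochhammer_succ_right, smeval_mul]
  simp [smeval_sub, smeval_X, smeval_natCast, Nat.factorial_succ]
  field_simp

theorem grunwaldW_zero (β : ℝ) : grunwaldW β 0 = 1 := rfl

theorem grunwaldW_one (β : ℝ) : grunwaldW β 1 = -β := by
  simp [grunwaldW]

theorem grunwaldW_eq_neg_one_pow_mul_choose (β : ℝ) (k : ℕ) :
    grunwaldW β k = (-1) ^ k * Ring.choose β k := by
  induction k with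
  | zero => simp [grunwaldW]
  | succ k ih =>
    have hk : (k : ℝ) + 1 ≠ 0 := by positivity
    rw [grunwaldW, ih, eq_div_of_mul_eq hk (Ring.choose_succ_right_eq β k)]
    field_simp
    ring

theorem hasSum_grunwaldW_mul_pow (β : ℝ) {z : ℝ} (hz : |z| < 1) :
    HasSum (fun k ↦ grunwaldW β k * z ^ k) ((1 - z) ^ β) := by
  have hmem : -z ∈ Metric.eball (0 : ℝ) 1 := by
    simpa [edist_dist, Real.dist_eq] using hz
  have hbinom := (Real.one_add_rpow_hasFPowerSeriesOnBall_zero (a := β)).hasSum hmem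
  simp only [binomialSeries, FormalMultilinearSeries.ofScalars_apply_eq, smul_eq_mul] at hbinom
  rw [zero_add, ← sub_eq_add_neg] at hbinom
  have hcoeff (k : ℕ) : Ring.choose β k * (-z) ^ k = grunwaldW β k * z ^ k := by
    rw [grunwaldW_eq_neg_one_pow_mul_choose, neg_pow]
    ring
  simpa only [hcoeff] using hbinom

theorem grunwaldW_succ_eq_mul_sub_one (β : ℝ) (n : ℕ) :
    grunwaldW β (n + 1) = -β / (n + 1) * grunwaldW (β - 1) n := by
  induction n with
  | zero => simp [grunwaldW]
  | succ n ih =>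
    rw [grunwaldW, ih, grunwaldW]
    push_cast
    field_simp
    ring

theorem sum_range_succ_grunwaldW (β : ℝ) (n : ℕ) :
    ∑ k ∈ range (n + 1), grunwaldW β k = grunwaldW (β - 1) n := by
  induction n with
  | zero => simp [grunwaldW]
  | succ n ih =>
    rw [sum_range_succ, ih, grunwaldW_succ_eq_mul_sub_one, grunwaldW]
    field_simp
    ring

theorem grunwaldW_nonpos {α : ℝ} (h0 : 0 ≤ α) (h1 : α ≤ 1) {n : ℕ} (hn : 1 ≤ n) :
    grunwaldW α n ≤ 0 := by
  induction n, hn using Nat.le_induction with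
  | base => simpa [grunwaldW_one] using h0
  | succ n hn ih =>
    have : (1 + α) / ((n : ℝ) + 1) ≤ 1 := by
      rw [div_le_one (by positivity)]
      have : (1 : ℝ) ≤ n := by exact_mod_cast hn
      linarith
    exact mul_nonpos_of_nonneg_of_nonpos (by linarith) ih

theorem grunwaldW_nonneg {β : ℝ} (h1 : 1 ≤ β) (h2 : β ≤ 2) {n : ℕ} (hn : 2 ≤ n) :
    0 ≤ grunwaldW β n := by
  obtain ⟨m, rfl⟩ := Nat.exists_eq_add_of_le' hn
  rw [grunwaldW_succ_eq_mul_sub_one]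
  exact mul_nonneg_of_nonpos_of_nonpos
    (div_nonpos_of_nonpos_of_nonneg (by linarith) (by positivity))
    (grunwaldW_nonpos (by linarith) (by linarith) (by omega))

theorem summable_grunwaldW {β : ℝ} (h1 : 1 ≤ β) (h2 : β ≤ 2) : Summable (grunwaldW β) := by
  refine (summable_nat_add_iff 2).mp (summable_of_sum_range_le (c := β - 1)
    (fun n ↦ grunwaldW_nonneg h1 h2 (by omega)) fun n ↦ ?_)
  have hpartial := sum_range_succ_grunwaldW β (n + 1)
  simp only [sum_range_succ', zero_add, grunwaldW_zero, grunwaldW_one] at hpartial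
  have := grunwaldW_nonpos (α := β - 1) (by linarith) (by linarith) (Nat.le_add_left 1 n)
  linarith

theorem hasSum_grunwaldW_zero {β : ℝ} (h1 : 1 ≤ β) (h2 : β ≤ 2) : HasSum (grunwaldW β) 0 := by
  have habel := Real.tendsto_tsum_powerSeries_nhdsWithin_lt
    (summable_grunwaldW h1 h2).hasSum.tendsto_sum_nat
  have hpow : Tendsto (fun x : ℝ ↦ (1 - x) ^ β) (𝓝[<] 1) (𝓝 0) := by
    have hcont : Continuous fun x : ℝ ↦ (1 - x) ^ β :=
      (Real.continuous_rpow_const (by linarith)).comp (continuous_const.sub continuous_id)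
    simpa [Real.zero_rpow (by linarith : β ≠ 0)] using
      (hcont.tendsto 1).mono_left nhdsWithin_le_nhds
  have heq : (fun x : ℝ ↦ ∑' k, grunwaldW β k * x ^ k) =ᶠ[𝓝[<] 1] fun x ↦ (1 - x) ^ β := by
    filter_upwards [Ioo_mem_nhdsLT (show (0 : ℝ) < 1 by norm_num)] with x hx
    exact (hasSum_grunwaldW_mul_pow β (abs_lt.mpr ⟨by linarith [hx.1], hx.2⟩)).tsum_eq
  rw [← tendsto_nhds_unique (habel.congr' heq) hpow]
  exact (summable_grunwaldW h1 h2).hasSum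

theorem hasSum_grunwaldW_mul_pow_of_le_one {β z : ℝ} (h1 : 1 ≤ β) (h2 : β ≤ 2)
    (hz0 : -1 < z) (hz1 : z ≤ 1) :
    HasSum (fun k ↦ grunwaldW β k * z ^ k) ((1 - z) ^ β) := by
  rcases hz1.lt_or_eq with hz1 | rfl
  · exact hasSum_grunwaldW_mul_pow β (abs_lt.mpr ⟨hz0, hz1⟩)
  · simpa [Real.zero_rpow (by linarith : β ≠ 0)] using hasSum_grunwaldW_zero h1 h2

theorem Real.exp_mul_exp_neg (x : ℝ) : Real.exp x * Real.exp (-x) = 1 := by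
  rw [← Real.exp_add, add_neg_cancel, Real.exp_zero]

theorem temperedG_add_two (β lam h γ1 γ2 γ3 : ℝ) (k : ℕ) :
    temperedG β lam h γ1 γ2 γ3 (k + 2) =
      γ1 * Real.exp (h * lam) * (grunwaldW β (k + 2) * Real.exp (-(h * lam)) ^ (k + 2)) +
      γ2 * (grunwaldW β (k + 1) * Real.exp (-(h * lam)) ^ (k + 1)) +
      γ3 * Real.exp (-(h * lam)) * (grunwaldW β k * Real.exp (-(h * lam)) ^ k) := by
  have hexp : Real.exp (-(((k : ℝ) + 1) * (h * lam))) = Real.exp (-(h * lam)) ^ (k + 1) := by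
    rw [← Real.exp_nat_mul]; push_cast; ring_nf
  rw [temperedG, hexp]
  linear_combination
    (-γ1 * grunwaldW β (k + 2) * Real.exp (-(h * lam)) ^ (k + 1)) * Real.exp_mul_exp_neg (h * lam)

theorem hasSum_temperedG {β lam h γ1 γ2 γ3 S : ℝ}
    (hW : HasSum (fun k ↦ grunwaldW β k * Real.exp (-(h * lam)) ^ k) S) :
    HasSum (temperedG β lam h γ1 γ2 γ3)
      ((γ1 * Real.exp (h * lam) + γ2 + γ3 * Real.exp (-(h * lam))) * S) := by
  set z := Real.exp (-(h * lam))
  set E := Real.exp (h * lam)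
  have htail := (((hasSum_nat_add_iff' 2).mpr hW).mul_left (γ1 * E)).add
    (((hasSum_nat_add_iff' 1).mpr hW).mul_left γ2) |>.add (hW.mul_left (γ3 * z))
  have hval : (γ1 * E + γ2 + γ3 * z) * S - ∑ i ∈ range 2, temperedG β lam h γ1 γ2 γ3 i =
      γ1 * E * (S - ∑ i ∈ range 2, grunwaldW β i * z ^ i) +
        γ2 * (S - ∑ i ∈ range 1, grunwaldW β i * z ^ i) + γ3 * z * S := by
    simp only [sum_range_succ, sum_range_zero, temperedG, grunwaldW_zero, grunwaldW_one]
    linear_combination -γ1 * β * Real.exp_mul_exp_neg (h * lam)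
  rw [← hasSum_nat_add_iff' 2, hval]
  simpa only [temperedG_add_two] using htail

theorem tempered_weights_sum (β lam h γ1 γ2 γ3 : ℝ)
    (hβ1 : 1 < β) (hβ2 : β < 2) (hlam : 0 ≤ lam) (hh : 0 < h) :
    Summable (fun k : ℕ => |temperedG β lam h γ1 γ2 γ3 k|) ∧
    HasSum (temperedG β lam h γ1 γ2 γ3)
      ((γ1 * Real.exp (h * lam) + γ2 + γ3 * Real.exp (-(h * lam))) *
        (1 - Real.exp (-(h * lam))) ^ β) := by
  have hz1 : Real.exp (-(h * lam)) ≤ 1 :=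
    Real.exp_le_one_iff.mpr (neg_nonpos.mpr (mul_nonneg hh.le hlam))
  have hz0 : -1 < Real.exp (-(h * lam)) := by linarith [Real.exp_pos (-(h * lam))]
  have hsum := hasSum_temperedG (γ1 := γ1) (γ2 := γ2) (γ3 := γ3)
    (hasSum_grunwaldW_mul_pow_of_le_one hβ1.le hβ2.le hz0 hz1)
  exact ⟨hsum.summable.abs, hsum⟩
end
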